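/- Let X be a chain complex of right R-modules and Y a chain complex of left R-modules, with either X bounded on the right or Y bounded on the left. If the complex X_l ⊗_R Y is exact for every l ∈ ℤ, then the total tensor complex X ⊗_R Y is exact. -/

import Mathlib

/-!
The total complex in degree `n` is the direct sum of the `K^{p, n-p}`, and the argument is the
staircase chase. Let `x` be a cycle whose components vanish in the columns `p < k`. The
`(k, n - k + 1)`-component of `dx = 0` is `± d_v x_k`, so `x_k` is a cycle of the exact row `k`,
say `x_k = d_v w`; subtracting `d(± w)` from `x` kills the column `k` without touching the columns
further left. As `x` has finite support and `K^{p, n-p} = 0` for `p ≫ 0`, finitely many such steps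
reach `0`. For `X ⊗ Y` the rows are the complexes `X_p ⊗ Y`, and either boundedness hypothesis
makes `X_p ⊗ Y_{n-p}` vanish for `p ≫ 0`.
-/

open CategoryTheory Limits TensorProduct

/-- The double complex with `(p, q)`-entry `X_p ⊗[R] Y_q`; its total complex is the
total tensor product complex `X ⊗_R Y`. -/
noncomputable def tensorBicomplex (R : Type) [CommRing R]
    (X Y : CochainComplex (ModuleCat.{0} R) ℤ) :
    HomologicalComplex (CochainComplex (ModuleCat.{0} R) ℤ) (ComplexShape.up ℤ) where
  X p :=
    { X := fun q => ModuleCat.of R (X.X p ⊗[R] Y.X q)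
      d := fun q q' => ModuleCat.ofHom (LinearMap.lTensor (X.X p) (Y.d q q').hom)
      shape := fun q q' h => by
        ext1
        simp [Y.shape q q' h]
      d_comp_d' := fun i j k _ _ => by
        ext1
        simp only [ModuleCat.hom_comp, ModuleCat.hom_ofHom, ModuleCat.hom_zero]
        rw [← LinearMap.lTensor_comp, ← ModuleCat.hom_comp, Y.d_comp_d, ModuleCat.hom_zero,
          LinearMap.lTensor_zero] }
  d p p' :=
    { f := fun q => ModuleCat.ofHom (LinearMap.rTensor (Y.X q) (X.d p p').hom)
      comm' := fun i j _ => by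
        ext1
        simp only [ModuleCat.hom_comp, ModuleCat.hom_ofHom]
        rw [LinearMap.lTensor_comp_rTensor, LinearMap.rTensor_comp_lTensor] }
  shape := fun p p' h => by
    ext q : 1
    ext1
    simp [X.shape p p' h]
  d_comp_d' := fun i j k _ _ => by
    ext q : 1
    have h1 : (LinearMap.rTensor (R := R) (Y.X q) (X.d j k).hom).comp
        (LinearMap.rTensor (Y.X q) (X.d i j).hom) = 0 := by
      rw [← LinearMap.rTensor_comp, ← ModuleCat.hom_comp, X.d_comp_d, ModuleCat.hom_zero,
        LinearMap.rTensor_zero]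
    ext1
    exact h1


/-- The total tensor product complex `X ⊗_R Y` of two complexes, obtained as the
total complex of the double complex of componentwise tensor products. -/
noncomputable def tensorComplex (R : Type) [CommRing R]
    (X Y : CochainComplex (ModuleCat.{0} R) ℤ) :
    CochainComplex (ModuleCat.{0} R) ℤ :=
  HomologicalComplex₂.total (tensorBicomplex R X Y) (ComplexShape.up ℤ)

/-- The morphism of double complexes `V ⊗ A ⟶ W ⊗ A` induced by `φ : V ⟶ W`. -/
noncomputable def tensorBicomplexMap (R : Type) [CommRing R]
    {V W : CochainComplex (ModuleCat.{0} R) ℤ} (φ : V ⟶ W)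
    (A : CochainComplex (ModuleCat.{0} R) ℤ) :
    tensorBicomplex R V A ⟶ tensorBicomplex R W A where
  f p :=
    { f := fun q => ModuleCat.ofHom (LinearMap.rTensor (A.X q) (φ.f p).hom)
      comm' := fun i j _ => by
        have h : (LinearMap.lTensor (W.X p) (A.d i j).hom).comp
            (LinearMap.rTensor (A.X i) (φ.f p).hom) =
          (LinearMap.rTensor (A.X j) (φ.f p).hom).comp
            (LinearMap.lTensor (V.X p) (A.d i j).hom) := by
          rw [LinearMap.lTensor_comp_rTensor, LinearMap.rTensor_comp_lTensor]
        ext1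
        exact h }
  comm' := fun p p' _ => by
    have h : ∀ q, (LinearMap.rTensor (R := R) (A.X q) (W.d p p').hom).comp
        (LinearMap.rTensor (A.X q) (φ.f p).hom) =
      (LinearMap.rTensor (A.X q) (φ.f p').hom).comp
        (LinearMap.rTensor (A.X q) (V.d p p').hom) := by
      intro q
      rw [← LinearMap.rTensor_comp, ← LinearMap.rTensor_comp, ← ModuleCat.hom_comp,
        ← ModuleCat.hom_comp, φ.comm]
    ext q : 1
    ext1
    exact h q

/-- The induced morphism `V ⊗_R A ⟶ W ⊗_R A` of total tensor product complexes. -/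
noncomputable def tensorComplexMap (R : Type) [CommRing R]
    {V W : CochainComplex (ModuleCat.{0} R) ℤ} (φ : V ⟶ W)
    (A : CochainComplex (ModuleCat.{0} R) ℤ) :
    tensorComplex R V A ⟶ tensorComplex R W A :=
  HomologicalComplex₂.total.map (tensorBicomplexMap R φ A) (ComplexShape.up ℤ)

lemma HomologicalComplex.ExactAt.exists_d_eq {R : Type*} [Ring R] {ι : Type*}
    {c : ComplexShape ι} {C : HomologicalComplex (ModuleCat R) c} {i j k : ι} (hC : C.ExactAt j)
    (hi : c.prev j = i) (hk : c.next j = k) (z : C.X j) (hz : C.d j k z = 0) :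
    ∃ w, C.d i j w = z := by
  rw [HomologicalComplex.exactAt_iff' C i j k hi hk, ShortComplex.moduleCat_exact_iff] at hC
  exact hC z hz

namespace HomologicalComplex₂

open ComplexShape

local notation "πℤ" => π (up ℤ) (up ℤ) (up ℤ)

variable {R : Type*} [Ring R] (K : HomologicalComplex₂ (ModuleCat R) (up ℤ) (up ℤ))
  [K.HasTotal (up ℤ)]

noncomputable def totalXIsoDirectSum (n : ℤ) :
    (K.total (up ℤ)).X n ≅
      ModuleCat.of R (DirectSum (πℤ ⁻¹' {n}) fun i => (K.X i.1.1).X i.1.2) :=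
  ModuleCat.coprodIsoDirectSum _

noncomputable def totalComponent (p q n : ℤ) (h : p + q = n) :
    (K.total (up ℤ)).X n →ₗ[R] (K.X p).X q :=
  DirectSum.component R (πℤ ⁻¹' {n}) _ ⟨(p, q), h⟩ ∘ₗ (K.totalXIsoDirectSum n).hom.hom

variable {K}

lemma totalXIsoDirectSum_hom_ιTotal_apply (p q n : ℤ) (h : p + q = n) (z : (K.X p).X q) :
    (K.totalXIsoDirectSum n).hom (K.ιTotal (up ℤ) p q n h z) =
      DirectSum.lof R (πℤ ⁻¹' {n}) (fun i => (K.X i.1.1).X i.1.2) ⟨(p, q), h⟩ z :=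
  ModuleCat.ι_coprodIsoDirectSum_hom_apply (K.toGradedObject.mapObjFun πℤ n) ⟨(p, q), h⟩ z

lemma totalComponent_ιTotal_self (p q n : ℤ) (h : p + q = n) (z : (K.X p).X q) :
    K.totalComponent p q n h (K.ιTotal (up ℤ) p q n h z) = z := by
  rw [totalComponent, LinearMap.comp_apply]
  erw [totalXIsoDirectSum_hom_ιTotal_apply]
  exact DirectSum.component.lof_self _ _ _

lemma totalComponent_ιTotal_of_ne {p q p' q' n : ℤ} (h : p + q = n) (h' : p' + q' = n)
    (hp : p' ≠ p) (z : (K.X p').X q') :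
    K.totalComponent p q n h (K.ιTotal (up ℤ) p' q' n h' z) = 0 := by
  rw [totalComponent, LinearMap.comp_apply]
  erw [totalXIsoDirectSum_hom_ιTotal_apply, DirectSum.component.of, dif_neg]
  exact fun hpp => hp (congrArg (fun i => i.1.1) hpp)

lemma eq_zero_of_totalComponent_eq_zero {n : ℤ} {x : (K.total (up ℤ)).X n}
    (hx : ∀ p q h, K.totalComponent p q n h x = 0) : x = 0 := by
  apply (K.totalXIsoDirectSum n).toLinearEquiv.injective
  rw [map_zero]
  exact DirectSum.ext_component R fun ⟨⟨p, q⟩, h⟩ => hx p q h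

lemma exists_totalComponent_eq_zero_of_lt {n : ℤ} (x : (K.total (up ℤ)).X n) :
    ∃ k, ∀ p q h, p < k → K.totalComponent p q n h x = 0 := by
  classical
  obtain ⟨k, hk⟩ := (((K.totalXIsoDirectSum n).hom x).support.image fun i => i.1.1).bddBelow
  refine ⟨k, fun p q h hpk => ?_⟩
  by_contra hne
  have hmem : (⟨(p, q), h⟩ : πℤ ⁻¹' {n}) ∈ ((K.totalXIsoDirectSum n).hom x).support :=
    DFinsupp.mem_support_iff.mpr hne
  exact hpk.not_ge (hk (Finset.mem_image_of_mem _ hmem))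

lemma total_d_ιTotal_apply {p q p' q' m m' : ℤ} (hp : p + 1 = p') (hq : q + 1 = q')
    (hm : m + 1 = m') (h : p + q = m) (z : (K.X p).X q) :
    (K.total (up ℤ)).d m m' (K.ιTotal (up ℤ) p q m h z) =
      K.ιTotal (up ℤ) p' q m' (show p' + q = m' by omega) ((K.d p p').f q z) +
        p.negOnePow •
          K.ιTotal (up ℤ) p q' m' (show p + q' = m' by omega) ((K.X p).d q q' z) := by
  have hd : K.ιTotal (up ℤ) p q m h ≫ (K.total (up ℤ)).d m m' =
      (K.d p p').f q ≫ K.ιTotal (up ℤ) p' q m' (show p' + q = m' by omega) +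
        p.negOnePow •
          ((K.X p).d q q' ≫ K.ιTotal (up ℤ) p q' m' (show p + q' = m' by omega)) := by
    rw [total_d, Preadditive.comp_add, ι_D₁, ι_D₂, d₁_eq K _ hp, d₂_eq K _ _ hq,
      show ε₁ (up ℤ) (up ℤ) (up ℤ) (p, q) = 1 from rfl, one_smul]
    rfl
  exact congr(ModuleCat.Hom.hom $hd z)

lemma total_induction {n : ℤ} {P : (K.total (up ℤ)).X n → Prop} (zero : P 0)
    (add : ∀ x y, P x → P y → P (x + y))
    (ιTotal : ∀ p q (h : p + q = n) (z : (K.X p).X q), P (K.ιTotal (up ℤ) p q n h z))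
    (x : (K.total (up ℤ)).X n) : P x := by
  obtain ⟨y, rfl⟩ := (K.totalXIsoDirectSum n).toLinearEquiv.symm.surjective x
  induction y using DirectSum.induction_on with
  | zero => simpa using zero
  | of i z =>
    obtain ⟨⟨p, q⟩, h⟩ := i
    convert ιTotal p q h z
    exact ModuleCat.lof_coprodIsoDirectSum_inv_apply (K.toGradedObject.mapObjFun πℤ n)
      ⟨(p, q), h⟩ z
  | add y y' hy hy' => simpa using add _ _ hy hy'

lemma totalComponent_total_d {p q p' q' m m' : ℤ} (hp : p' + 1 = p) (hq : q' + 1 = q)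
    (hm : m + 1 = m') (h : p + q = m') (x : (K.total (up ℤ)).X m) :
    K.totalComponent p q m' h ((K.total (up ℤ)).d m m' x) =
      (K.d p' p).f q (K.totalComponent p' q m (by omega) x) +
        p.negOnePow • (K.X p).d q' q (K.totalComponent p q' m (by omega) x) := by
  subst hp hq hm
  induction x using total_induction with
  | zero => simp
  | add x y hx hy => simp only [map_add, hx, hy, smul_add]; abel
  | ιTotal a b hab z =>
    rw [total_d_ιTotal_apply rfl rfl rfl]
    by_cases ha : a = p'
    · obtain rfl := ha
      obtain rfl : b = q' + 1 := by omega
      simp (disch := omega) [totalComponent_ιTotal_self, totalComponent_ιTotal_of_ne]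
    by_cases ha' : a = p' + 1
    · obtain rfl := ha'
      obtain rfl : b = q' := by omega
      simp (disch := omega) [totalComponent_ιTotal_self, totalComponent_ιTotal_of_ne]
    simp (disch := omega) [totalComponent_ιTotal_of_ne]

lemma exists_totalComponent_sub_d_eq_zero_of_le (hrows : ∀ p q, (K.X p).ExactAt q) {n k : ℤ}
    {x : (K.total (up ℤ)).X n} (hx : (K.total (up ℤ)).d n (n + 1) x = 0)
    (hk : ∀ p q h, p < k → K.totalComponent p q n h x = 0) :
    ∃ u, ∀ p q h, p ≤ k →
      K.totalComponent p q n h (x - (K.total (up ℤ)).d (n - 1) n u) = 0 := by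
  set z := K.totalComponent k (n - k) n (by omega) x
  have hz : (K.X k).d (n - k) (n - k + 1) z = 0 := by
    have hdx := K.totalComponent_total_d (p := k) (q' := n - k) (show k - 1 + 1 = k by omega)
      rfl rfl (show k + (n - k + 1) = n + 1 by omega) x
    rw [hx, map_zero, hk _ _ _ (by omega), map_zero, zero_add] at hdx
    exact (smul_eq_zero_iff_eq _).mp hdx.symm
  obtain ⟨w, hw⟩ := (hrows k (n - k)).exists_d_eq (i := n - k - 1) (by simp) (by simp) z hz
  refine ⟨K.ιTotal (up ℤ) k (n - k - 1) (n - 1) (show k + (n - k - 1) = n - 1 by omega)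
    (k.negOnePow • w), fun p q h hpk => ?_⟩
  rw [map_sub,
    totalComponent_total_d (p' := p - 1) (q' := q - 1) (by omega) (by omega) (by omega),
    totalComponent_ιTotal_of_ne _ _ (by omega : k ≠ p - 1), map_zero, zero_add]
  rcases hpk.lt_or_eq with hpk | rfl
  · rw [hk p q h hpk, totalComponent_ιTotal_of_ne _ _ (by omega : k ≠ p), map_zero, smul_zero,
      sub_zero]
  · obtain rfl : q = n - p := by omega
    rw [totalComponent_ιTotal_self, Units.smul_def p.negOnePow w, map_zsmul, ← Units.smul_def,
      hw, smul_smul, Int.units_mul_self, one_smul, sub_self]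

lemma exists_d_eq_of_totalComponent_eq_zero_of_lt (hrows : ∀ p q, (K.X p).ExactAt q) {n M : ℤ}
    (hM : ∀ p q, p + q = n → M ≤ p → IsZero ((K.X p).X q)) {k : ℤ} (hkM : k ≤ M)
    {x : (K.total (up ℤ)).X n} (hx : (K.total (up ℤ)).d n (n + 1) x = 0)
    (hk : ∀ p q h, p < k → K.totalComponent p q n h x = 0) :
    ∃ y, (K.total (up ℤ)).d (n - 1) n y = x := by
  induction k, hkM using Int.leInductionDown generalizing x with
  | base =>
    refine ⟨0, (map_zero _).trans (eq_zero_of_totalComponent_eq_zero fun p q h => ?_).symm⟩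
    rcases lt_or_ge p M with hp | hp
    · exact hk p q h hp
    · have : Subsingleton ((K.X p).X q) := ModuleCat.isZero_iff_subsingleton.mp (hM p q h hp)
      exact Subsingleton.elim _ _
  | pred k hkM ih =>
    obtain ⟨u, hu⟩ := exists_totalComponent_sub_d_eq_zero_of_le hrows hx hk
    have hdx : (K.total (up ℤ)).d n (n + 1) (x - (K.total (up ℤ)).d (n - 1) n u) = 0 := by
      rw [map_sub, hx, ← ConcreteCategory.comp_apply, HomologicalComplex.d_comp_d]
      simp
    obtain ⟨y, hy⟩ := ih hdx fun p q h hp => hu p q h (by omega)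
    exact ⟨y + u, by rw [map_add, hy, sub_add_cancel]⟩

theorem exactAt_total_of_exactAt_rows (hrows : ∀ p q, (K.X p).ExactAt q) {n : ℤ}
    (hbd : ∃ M, ∀ p q, p + q = n → M ≤ p → IsZero ((K.X p).X q)) :
    (K.total (up ℤ)).ExactAt n := by
  obtain ⟨M, hM⟩ := hbd
  rw [HomologicalComplex.exactAt_iff' _ (n - 1) n (n + 1) (by simp) (by simp),
    ShortComplex.moduleCat_exact_iff]
  intro x hx
  obtain ⟨k, hk⟩ := exists_totalComponent_eq_zero_of_lt x
  exact exists_d_eq_of_totalComponent_eq_zero_of_lt hrows hM (min_le_right k M) hx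
    fun p q h hp => hk p q h (hp.trans_le (min_le_left k M))

end HomologicalComplex₂

/-- Let `X, Y` be complexes of `R`-modules (written cohomologically, so a complex is
"right-bounded" in the homological sense when its components vanish in all large
cohomological degrees, and "left-bounded" when they vanish in all small cohomological
degrees), with either `X` right-bounded or `Y` left-bounded.  If the complex
`X_l ⊗_R Y` is exact for every `l`, then the total tensor product complex `X ⊗_R Y`
is exact. -/
theorem tensorComplex_exact_of_levelwise_exact
    (R : Type) [CommRing R] (X Y : CochainComplex (ModuleCat.{0} R) ℤ)
    (hbd : (∃ N : ℤ, ∀ n : ℤ, N ≤ n → IsZero (X.X n)) ∨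
           (∃ N : ℤ, ∀ n : ℤ, n ≤ N → IsZero (Y.X n)))
    (hexact : ∀ l n : ℤ,
      Function.Exact
        (LinearMap.lTensor (X.X l) ((Y.d (n - 1) n).hom : Y.X (n - 1) →ₗ[R] Y.X n))
        (LinearMap.lTensor (X.X l) ((Y.d n (n + 1)).hom : Y.X n →ₗ[R] Y.X (n + 1)))) :
    ∀ n : ℤ, (tensorComplex R X Y).ExactAt n := by
  intro n
  refine HomologicalComplex₂.exactAt_total_of_exactAt_rows (fun l q => ?_) ?_
  · rw [HomologicalComplex.exactAt_iff' _ (q - 1) q (q + 1) (by simp) (by simp),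
      ShortComplex.ShortExact.moduleCat_exact_iff_function_exact]
    exact hexact l q
  · have tensor_isZero : ∀ p q, IsZero (X.X p) ∨ IsZero (Y.X q) →
        IsZero (((tensorBicomplex R X Y).X p).X q) := by
      rintro p q (h | h) <;> rw [ModuleCat.isZero_iff_subsingleton] at h ⊢ <;>
        exact (inferInstance : Subsingleton (X.X p ⊗[R] Y.X q))
    rcases hbd with ⟨N, hN⟩ | ⟨N, hN⟩
    · exact ⟨N, fun p q _ hp => tensor_isZero p q (.inl (hN p hp))⟩
    · exact ⟨n - N, fun p q hpq hp => tensor_isZero p q (.inr (hN q (by omega)))⟩
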